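/- arXiv:2206.07623 — 2 statements merged into one kernel-verified Lean document; each statement's English description precedes it below -/
import Mathlib

section
/- Suppose there exist a matrix P with ZᵀP = PᵀZ ⪰ 0, scalars ε > 0, γ > 0, and a symmetric matrix inequality [[Υ, PᵀF, Pᵀ B̃],[FᵀP, −εI, 0],[B̃ᵀP, 0, −γI]] ≺ 0 where Υ = A_cᵀP + PᵀA_c + εGᵀG + ΓᵀΓ. Then for every e, Δf, w with Δfᵀ Δf ≤ eᵀ GᵀG e, the dissipation inequality 2 eᵀ Pᵀ(A_c e + F Δf + B̃ w) + eᵀ ΓᵀΓ e − γ wᵀ w < 0 holds whenever (e, Δf, w) ≠ 0. -/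
/-! Evaluating the quadratic form of the LMI matrix at `(e, Δf, w)` gives the dissipation
expression plus `ε (eᵀGᵀGe - ΔfᵀΔf)` (an S-procedure). The Lipschitz constraint makes the
extra term nonnegative, so negative definiteness forces the dissipation expression below zero. -/

open Matrix

variable {R ι κ χ : Type*} [CommRing R]

theorem sumElim_sumElim_eq_zero {u : ι → R} {v : κ → R} {z : χ → R}
    (h : Sum.elim (Sum.elim u v) z = 0) : u = 0 ∧ v = 0 ∧ z = 0 := by
  rw [← Sum.elim_zero_zero, ← Sum.elim_zero_zero, Sum.elim_eq_iff, Sum.elim_eq_iff] at h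
  exact and_assoc.1 h

variable [Fintype ι] [Fintype κ] [Fintype χ]

theorem sumElim_dotProduct_fromBlocks_mulVec_sumElim (A : Matrix ι ι R) (B : Matrix ι κ R)
    (C : Matrix κ ι R) (D : Matrix κ κ R) (u : ι → R) (v : κ → R) :
    Sum.elim u v ⬝ᵥ fromBlocks A B C D *ᵥ Sum.elim u v =
      u ⬝ᵥ A *ᵥ u + u ⬝ᵥ B *ᵥ v + (v ⬝ᵥ C *ᵥ u + v ⬝ᵥ D *ᵥ v) := by
  simp only [fromBlocks_mulVec, Sum.elim_comp_inl, Sum.elim_comp_inr, sumElim_dotProduct_sumElim,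
    dotProduct_add]

theorem dotProduct_transpose_mul_mulVec (A : Matrix ι κ R) (B : Matrix ι χ R) (u : κ → R)
    (v : χ → R) : u ⬝ᵥ (Aᵀ * B) *ᵥ v = v ⬝ᵥ (Bᵀ * A) *ᵥ u := by
  rw [← mulVec_mulVec, ← mulVec_mulVec, dotProduct_transpose_mulVec, dotProduct_transpose_mulVec,
    dotProduct_comm]

theorem lmi_quadForm_eq [DecidableEq κ] [DecidableEq χ] (P Ac G Γ : Matrix ι ι R)
    (F : Matrix ι κ R) (Bt : Matrix ι χ R) (ε γ : R) (e : ι → R) (Δf : κ → R) (w : χ → R) :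
    Sum.elim (Sum.elim e Δf) w ⬝ᵥ fromBlocks
      (fromBlocks (Acᵀ * P + Pᵀ * Ac + ε • (Gᵀ * G) + Γᵀ * Γ) (Pᵀ * F) (Fᵀ * P) (-(ε • 1)))
      (fromRows (Pᵀ * Bt) 0) (fromCols (Btᵀ * P) 0) (-(γ • 1)) *ᵥ Sum.elim (Sum.elim e Δf) w =
      2 * (e ⬝ᵥ Pᵀ *ᵥ (Ac *ᵥ e + F *ᵥ Δf + Bt *ᵥ w)) + e ⬝ᵥ (Γᵀ * Γ) *ᵥ e - γ * (w ⬝ᵥ w)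
        + ε * (e ⬝ᵥ (Gᵀ * G) *ᵥ e - Δf ⬝ᵥ Δf) := by
  rw [sumElim_dotProduct_fromBlocks_mulVec_sumElim, sumElim_dotProduct_fromBlocks_mulVec_sumElim,
    fromRows_mulVec, fromCols_mulVec_sumElim]
  simp only [sumElim_dotProduct_sumElim, add_mulVec, dotProduct_add, mulVec_add, mulVec_mulVec,
    smul_mulVec, one_mulVec, neg_mulVec, dotProduct_neg, dotProduct_smul, zero_mulVec,
    dotProduct_zero, smul_eq_mul]
  rw [dotProduct_transpose_mul_mulVec Ac, dotProduct_transpose_mul_mulVec F,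
    dotProduct_transpose_mul_mulVec Bt]
  ring

theorem stmt5_general (n m q : ℕ)
    (P Ac G Γ : Matrix (Fin n) (Fin n) ℝ)
    (F : Matrix (Fin n) (Fin m) ℝ) (Bt : Matrix (Fin n) (Fin q) ℝ)
    (ε γ : ℝ) (hε : 0 < ε)
    (Υ : Matrix (Fin n) (Fin n) ℝ)
    (hΥ : Υ = Acᵀ * P + Pᵀ * Ac + ε • (Gᵀ * G) + Γᵀ * Γ)
    (M : Matrix ((Fin n ⊕ Fin m) ⊕ Fin q) ((Fin n ⊕ Fin m) ⊕ Fin q) ℝ)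
    (hM : M = Matrix.fromBlocks
      (Matrix.fromBlocks Υ (Pᵀ * F) (Fᵀ * P) (-(ε • (1 : Matrix (Fin m) (Fin m) ℝ))))
      (Matrix.fromRows (Pᵀ * Bt) (0 : Matrix (Fin m) (Fin q) ℝ))
      (Matrix.fromCols (Btᵀ * P) (0 : Matrix (Fin q) (Fin m) ℝ))
      (-(γ • (1 : Matrix (Fin q) (Fin q) ℝ))))
    (hneg : (-M).PosDef) :
    ∀ (e : Fin n → ℝ) (Δf : Fin m → ℝ) (w : Fin q → ℝ),
      Δf ⬝ᵥ Δf ≤ e ⬝ᵥ ((Gᵀ * G) *ᵥ e) →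
      (e ≠ 0 ∨ Δf ≠ 0 ∨ w ≠ 0) →
      2 * (e ⬝ᵥ (Pᵀ *ᵥ (Ac *ᵥ e + F *ᵥ Δf + Bt *ᵥ w)))
        + e ⬝ᵥ ((Γᵀ * Γ) *ᵥ e) - γ * (w ⬝ᵥ w) < 0 := by
  intro e Δf w hlip hne
  have hx : Sum.elim (Sum.elim e Δf) w ≠ 0 := fun h => by
    obtain ⟨he, hf, hw⟩ := sumElim_sumElim_eq_zero h
    tauto
  have hpos := hneg.dotProduct_mulVec_pos hx
  rw [star_trivial, neg_mulVec, dotProduct_neg, hM, hΥ, lmi_quadForm_eq] at hpos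
  linarith [mul_nonneg hε.le (sub_nonneg.2 hlip)]

/-- Feasibility of the LMI
`[[Υ, PᵀF, PᵀB̃],[FᵀP, −εI, 0],[B̃ᵀP, 0, −γI]] ≺ 0` with
`Υ = A_cᵀP + PᵀA_c + εGᵀG + ΓᵀΓ` implies the strict dissipation inequality
for every nonzero `(e, Δf, w)` satisfying the Lipschitz quadratic constraint. -/
theorem stmt5 (n m q : ℕ)
    (Z P Ac G Γ : Matrix (Fin n) (Fin n) ℝ)
    (F : Matrix (Fin n) (Fin m) ℝ) (Bt : Matrix (Fin n) (Fin q) ℝ)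
    (hsym : Zᵀ * P = Pᵀ * Z) (hpsd : (Zᵀ * P).PosSemidef)
    (ε γ : ℝ) (hε : 0 < ε) (hγ : 0 < γ)
    (Υ : Matrix (Fin n) (Fin n) ℝ)
    (hΥ : Υ = Acᵀ * P + Pᵀ * Ac + ε • (Gᵀ * G) + Γᵀ * Γ)
    (M : Matrix ((Fin n ⊕ Fin m) ⊕ Fin q) ((Fin n ⊕ Fin m) ⊕ Fin q) ℝ)
    (hM : M = Matrix.fromBlocks
      (Matrix.fromBlocks Υ (Pᵀ * F) (Fᵀ * P) (-(ε • (1 : Matrix (Fin m) (Fin m) ℝ))))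
      (Matrix.fromRows (Pᵀ * Bt) (0 : Matrix (Fin m) (Fin q) ℝ))
      (Matrix.fromCols (Btᵀ * P) (0 : Matrix (Fin q) (Fin m) ℝ))
      (-(γ • (1 : Matrix (Fin q) (Fin q) ℝ))))
    (hneg : (-M).PosDef) :
    ∀ (e : Fin n → ℝ) (Δf : Fin m → ℝ) (w : Fin q → ℝ),
      Δf ⬝ᵥ Δf ≤ e ⬝ᵥ ((Gᵀ * G) *ᵥ e) →
      (e ≠ 0 ∨ Δf ≠ 0 ∨ w ≠ 0) →
      2 * (e ⬝ᵥ (Pᵀ *ᵥ (Ac *ᵥ e + F *ᵥ Δf + Bt *ᵥ w)))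
        + e ⬝ᵥ ((Γᵀ * Γ) *ᵥ e) - γ * (w ⬝ᵥ w) < 0 :=
  stmt5_general n m q P Ac G Γ F Bt ε γ hε Υ hΥ M hM hneg
end

section
/- Given invertible matrices M, N with MZN = diag(I, 0) and a matrix P with ZᵀP = PᵀZ ⪰ 0, the matrix P admits a decomposition P = XZ + Z^{⊥T}Y with X = Mᵀ diag(P₁, I) M symmetric positive semidefinite (positive definite if P₁ ≻ 0), Z^{⊥T} = Mᵀ[0; I], and Y = [P₃ P₄]N⁻¹, where [[P₁, 0],[P₃, P₄]] = M^{−T} P N and P₁ is symmetric. -/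
/-! Conjugating by `M` and `N` brings `Z` to `E = diag(I, 0)`: with `B = M⁻ᵀ P N` one gets
`Nᵀ (Zᵀ P) N = E B = [[P₁, P₂], [0, 0]]`. Being positive semidefinite, this matrix is symmetric,
which forces `P₂ = 0`, and its corner `P₁` is symmetric positive semidefinite. Then
`B = diag(P₁, I) E + [0; I] [P₃ P₄]`, which multiplied by `Mᵀ` on the left and `N⁻¹` on the right
is the decomposition of `P`; and `X` is congruent to `diag(P₁, I)`. -/

open Matrix

namespace Matrix

variable {m n R : Type*}

theorem PosSemidef.toBlocks₁₁ [Ring R] [PartialOrder R] [StarRing R]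
    {M : Matrix (m ⊕ n) (m ⊕ n) R} (hM : M.PosSemidef) : M.toBlocks₁₁.PosSemidef :=
  hM.submatrix Sum.inl

section BlockDiagonal

variable [Fintype m] [Fintype n] [Ring R] [StarRing R]

theorem dotProduct_fromBlocks_zero_mulVec (A : Matrix m m R) (D : Matrix n n R)
    (x : m ⊕ n → R) :
    star x ⬝ᵥ fromBlocks A 0 0 D *ᵥ x =
      star (x ∘ Sum.inl) ⬝ᵥ A *ᵥ (x ∘ Sum.inl) + star (x ∘ Sum.inr) ⬝ᵥ D *ᵥ (x ∘ Sum.inr) := by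
  conv_lhs => rw [← Sum.elim_comp_inl_inr x, fromBlocks_mulVec]
  simp only [Sum.elim_comp_inl, Sum.elim_comp_inr, zero_mulVec, add_zero, zero_add]
  rw [← sumElim_dotProduct_sumElim]
  congr 1
  ext (_ | _) <;> rfl

variable [PartialOrder R] [IsOrderedAddMonoid R] {A : Matrix m m R} {D : Matrix n n R}

theorem PosSemidef.fromBlocks_zero (hA : A.PosSemidef) (hD : D.PosSemidef) :
    (fromBlocks A 0 0 D).PosSemidef :=
  .of_dotProduct_mulVec_nonneg (hA.isHermitian.fromBlocks (by simp) hD.isHermitian) fun x ↦ by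
    rw [dotProduct_fromBlocks_zero_mulVec]
    exact add_nonneg (hA.dotProduct_mulVec_nonneg _) (hD.dotProduct_mulVec_nonneg _)

theorem PosDef.fromBlocks_zero (hA : A.PosDef) (hD : D.PosDef) :
    (fromBlocks A 0 0 D).PosDef := by
  refine .of_dotProduct_mulVec_pos (hA.isHermitian.fromBlocks (by simp) hD.isHermitian)
    fun x hx ↦ ?_
  rw [dotProduct_fromBlocks_zero_mulVec]
  by_cases hl : x ∘ Sum.inl = 0
  · have hr : x ∘ Sum.inr ≠ 0 := fun hr ↦ hx <| by
      rw [← Sum.elim_comp_inl_inr x, hl, hr]; ext (_ | _) <;> rfl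
    exact add_pos_of_nonneg_of_pos (hA.posSemidef.dotProduct_mulVec_nonneg _)
      (hD.dotProduct_mulVec_pos hr)
  · exact add_pos_of_pos_of_nonneg (hA.dotProduct_mulVec_pos hl)
      (hD.posSemidef.dotProduct_mulVec_nonneg _)

end BlockDiagonal

section TrivialStar

variable [Fintype m] [Fintype n] [Ring R] [PartialOrder R] [StarRing R] [TrivialStar R]
  {A : Matrix n n R}

theorem PosSemidef.transpose_mul_mul_same (hA : A.PosSemidef) (B : Matrix n m R) :
    (Bᵀ * A * B).PosSemidef := by
  simpa only [conjTranspose_eq_transpose_of_trivial] using hA.conjTranspose_mul_mul_same B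

theorem PosDef.transpose_mul_mul_same (hA : A.PosDef) {B : Matrix n m R}
    (hB : Function.Injective B.mulVec) : (Bᵀ * A * B).PosDef := by
  simpa only [conjTranspose_eq_transpose_of_trivial] using hA.conjTranspose_mul_mul_same hB

end TrivialStar

section Invertible

variable {ι : Type*} [Fintype ι] [DecidableEq ι] [CommRing R] {M N : Matrix ι ι R}
  [Invertible M] [Invertible N]

theorem eq_inv_mul_mul_inv_of_mul_mul_eq {Z E : Matrix ι ι R} (h : M * Z * N = E) :
    Z = M⁻¹ * E * N⁻¹ := by
  simp only [← h, Matrix.mul_assoc, Matrix.inv_mul_cancel_left_of_invertible,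
    Matrix.mul_inv_of_invertible, Matrix.mul_one]

theorem eq_transpose_mul_mul_inv (P : Matrix ι ι R) : P = Mᵀ * ((M⁻¹)ᵀ * P * N) * N⁻¹ := by
  simp only [Matrix.mul_assoc, transpose_nonsing_inv, Matrix.mul_inv_cancel_left_of_invertible,
    Matrix.mul_inv_of_invertible, Matrix.mul_one]

end Invertible

section Decomposition

variable [Fintype m] [Fintype n] [DecidableEq m] [DecidableEq n] [CommRing R]
  {M N : Matrix (m ⊕ n) (m ⊕ n) R} [Invertible M]

theorem fromBlocks_one_zero_mul (B : Matrix (m ⊕ n) (m ⊕ n) R) :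
    fromBlocks 1 0 0 0 * B = fromBlocks B.toBlocks₁₁ B.toBlocks₁₂ 0 0 := by
  conv_lhs => rw [← fromBlocks_toBlocks B, fromBlocks_multiply]
  simp

theorem transpose_mul_transpose_mul_mul_eq_fromBlocks [Invertible N]
    (B : Matrix (m ⊕ n) (m ⊕ n) R) :
    Nᵀ * ((M⁻¹ * fromBlocks 1 0 0 0 * N⁻¹)ᵀ * (Mᵀ * B * N⁻¹)) * N =
      fromBlocks B.toBlocks₁₁ B.toBlocks₁₂ 0 0 := by
  simp only [transpose_mul, transpose_nonsing_inv, fromBlocks_transpose, transpose_one,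
    transpose_zero, Matrix.mul_assoc, Matrix.mul_inv_cancel_left_of_invertible,
    Matrix.inv_mul_cancel_left_of_invertible, Matrix.inv_mul_of_invertible, Matrix.mul_one,
    ← fromBlocks_one_zero_mul]

theorem transpose_mul_mul_inv_eq_of_toBlocks₁₂_eq_zero {B : Matrix (m ⊕ n) (m ⊕ n) R}
    (hB : B.toBlocks₁₂ = 0) :
    Mᵀ * B * N⁻¹ =
      Mᵀ * fromBlocks B.toBlocks₁₁ 0 0 1 * M * (M⁻¹ * fromBlocks 1 0 0 0 * N⁻¹) +
        Mᵀ * (1 : Matrix (m ⊕ n) (m ⊕ n) R).submatrix id Sum.inr *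
          (B.submatrix Sum.inr id * N⁻¹) := by
  have hsplit : B = fromBlocks B.toBlocks₁₁ 0 0 1 * fromBlocks 1 0 0 0 +
      (1 : Matrix (m ⊕ n) (m ⊕ n) R).submatrix id Sum.inr * B.submatrix Sum.inr id := by
    conv_lhs => rw [← fromBlocks_toBlocks B, hB]
    rw [fromBlocks_multiply]
    ext (i | i) (j | j) <;> simp [mul_apply, one_apply, toBlocks₂₁, toBlocks₂₂]
  conv_lhs => rw [hsplit]
  simp only [Matrix.mul_add, Matrix.add_mul, Matrix.mul_assoc,
    Matrix.mul_inv_cancel_left_of_invertible]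

end Decomposition

end Matrix

theorem stmt9_general (nd na : ℕ)
    (Z P M N : Matrix (Fin nd ⊕ Fin na) (Fin nd ⊕ Fin na) ℝ)
    [Invertible M] [Invertible N]
    (hMZN : M * Z * N = Matrix.fromBlocks 1 0 0 0)
    (hpsd : (Zᵀ * P).PosSemidef)
    (B : Matrix (Fin nd ⊕ Fin na) (Fin nd ⊕ Fin na) ℝ)
    (hB : B = (M⁻¹)ᵀ * P * N)
    (P₁ : Matrix (Fin nd) (Fin nd) ℝ) (hP₁ : P₁ = B.toBlocks₁₁)
    (X : Matrix (Fin nd ⊕ Fin na) (Fin nd ⊕ Fin na) ℝ)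
    (hX : X = Mᵀ * Matrix.fromBlocks P₁ 0 0 1 * M)
    (Zperp : Matrix (Fin nd ⊕ Fin na) (Fin na) ℝ)
    (hZperp : Zperp = Mᵀ * ((1 : Matrix (Fin nd ⊕ Fin na) (Fin nd ⊕ Fin na) ℝ).submatrix id Sum.inr))
    (Y : Matrix (Fin na) (Fin nd ⊕ Fin na) ℝ)
    (hY : Y = (B.submatrix Sum.inr id) * N⁻¹) :
    P = X * Z + Zperp * Y ∧ X.PosSemidef ∧ (P₁.PosDef → X.PosDef) ∧
      B.toBlocks₁₂ = 0 ∧ P₁.IsSymm := by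
  have hP : P = Mᵀ * B * N⁻¹ := hB ▸ eq_transpose_mul_mul_inv P
  subst hP₁ hX hZperp hY hP
  obtain rfl := eq_inv_mul_mul_inv_of_mul_mul_eq hMZN
  have hEB : (fromBlocks B.toBlocks₁₁ B.toBlocks₁₂ 0 0).PosSemidef := by
    simpa only [transpose_mul_transpose_mul_mul_eq_fromBlocks] using
      hpsd.transpose_mul_mul_same N
  have h₁₂ : B.toBlocks₁₂ = 0 := by
    simpa using (isHermitian_fromBlocks_iff.mp hEB.isHermitian).2.1
  have hP₁ : B.toBlocks₁₁.PosSemidef := by simpa using hEB.toBlocks₁₁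
  have hM : Function.Injective M.mulVec := mulVec_injective_of_isUnit (isUnit_of_invertible M)
  refine ⟨by simpa only [Matrix.mul_assoc] using
      transpose_mul_mul_inv_eq_of_toBlocks₁₂_eq_zero h₁₂,
    (hP₁.fromBlocks_zero .one).transpose_mul_mul_same M,
    fun h ↦ (h.fromBlocks_zero .one).transpose_mul_mul_same hM, h₁₂, ?_⟩
  simpa only [IsSymm, IsHermitian, conjTranspose_eq_transpose_of_trivial] using hP₁.isHermitian

/-- Given invertible `M, N` with `M Z N = diag(I,0)` and `P` with
`ZᵀP = PᵀZ ⪰ 0`, writing `M⁻ᵀ P N = [[P₁, P₂],[P₃, P₄]]`, the matrix `P`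
decomposes as `P = XZ + ZperpᵀY` with `X = Mᵀ diag(P₁, I) M` symmetric positive
semidefinite (positive definite if `P₁ ≻ 0`), `Zperpᵀ = Mᵀ[0;I]`,
`Y = [P₃ P₄]N⁻¹`, and moreover `P₂ = 0` and `P₁` is symmetric. -/
theorem stmt9 (nd na : ℕ)
    (Z P M N : Matrix (Fin nd ⊕ Fin na) (Fin nd ⊕ Fin na) ℝ)
    [Invertible M] [Invertible N]
    (hMZN : M * Z * N = Matrix.fromBlocks 1 0 0 0)
    (hsym : Zᵀ * P = Pᵀ * Z) (hpsd : (Zᵀ * P).PosSemidef)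
    (B : Matrix (Fin nd ⊕ Fin na) (Fin nd ⊕ Fin na) ℝ)
    (hB : B = (M⁻¹)ᵀ * P * N)
    (P₁ : Matrix (Fin nd) (Fin nd) ℝ) (hP₁ : P₁ = B.toBlocks₁₁)
    (X : Matrix (Fin nd ⊕ Fin na) (Fin nd ⊕ Fin na) ℝ)
    (hX : X = Mᵀ * Matrix.fromBlocks P₁ 0 0 1 * M)
    (Zperp : Matrix (Fin nd ⊕ Fin na) (Fin na) ℝ)
    (hZperp : Zperp = Mᵀ * ((1 : Matrix (Fin nd ⊕ Fin na) (Fin nd ⊕ Fin na) ℝ).submatrix id Sum.inr))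
    (Y : Matrix (Fin na) (Fin nd ⊕ Fin na) ℝ)
    (hY : Y = (B.submatrix Sum.inr id) * N⁻¹) :
    P = X * Z + Zperp * Y ∧ X.PosSemidef ∧ (P₁.PosDef → X.PosDef) ∧
      B.toBlocks₁₂ = 0 ∧ P₁.IsSymm :=
  stmt9_general nd na Z P M N hMZN hpsd B hB P₁ hP₁ X hX Zperp hZperp Y hY
end
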